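/- Crucial lemma for PIDE (Lemma 2.1). Let F : ℝ × ℝ^N × ℝ^N × S_N × ℝ → ℝ be continuous and elliptic, and let Φ, ψ : ℝ^N → ℝ be bounded C² functions. Let K ⊂ ℝ^N be compact and T > 0. Then there exists a function o : (0,∞) → ℝ with o(ε)/ε → 0 as ε → 0⁺, depending only on F, Φ, ψ, K, T, ν and R but not on t, x, y, such that for every ε > 0, every t ∈ [0,T] and every x ∈ K there exists y in the closed ball of radius R around x with ψ(y) + Φ(x) − Φ(y) − ε F(t,x,DΦ(x),D²Φ(x),I_R[x,Φ]) ≤ ψ(x) − ε F(t,x,Dψ(x),D²ψ(x),I_R[x,ψ]) + o(ε). -/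

import Mathlib

open MeasureTheory Metric Set Filter Topology RealInnerProductSpace

noncomputable section

/-- ℝ^N. -/
abbrev Euc (N : ℕ) := EuclideanSpace ℝ (Fin N)

/-- Symmetric matrices `S_N` are modelled as (continuous) bilinear forms on ℝ^N. -/
abbrev Bil (N : ℕ) := Euc N →L[ℝ] Euc N →L[ℝ] ℝ

/-- The Hessian `D²Φ(x)` as a bilinear form. -/
def hess {N : ℕ} (Φ : Euc N → ℝ) (x : Euc N) : Bil N :=
  fderiv ℝ (fun y => fderiv ℝ Φ y) x

/-- Ellipticity of `F`: `F(t,x,p,A,l) ≥ F(t,x,p,B,m)` whenever `A ≤ B` (as quadratic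
forms) and `l ≤ m`. -/
def Elliptic {N : ℕ} (F : ℝ → Euc N → Euc N → Bil N → ℝ → ℝ) : Prop :=
  ∀ (t : ℝ) (x p : Euc N) (A B : Bil N) (l m : ℝ),
    (∀ v, A v v ≤ B v v) → l ≤ m → F t x p B m ≤ F t x p A l

/-- Joint continuity of `F` in all its variables. -/
def ContinuousF {N : ℕ} (F : ℝ → Euc N → Euc N → Bil N → ℝ → ℝ) : Prop :=
  Continuous fun q : ℝ × Euc N × Euc N × Bil N × ℝ =>
    F q.1 q.2.1 q.2.2.1 q.2.2.2.1 q.2.2.2.2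

/-- The (truncated) Lévy operator
`I[x,Φ] = ∫ (Φ(x+z) − Φ(x) − DΦ(x)·z 1_B(z)) ν(dz)`. -/
def levyOp {N : ℕ} (ν : Measure (Euc N)) (Φ : Euc N → ℝ) (x : Euc N) : ℝ :=
  ∫ z, (Φ (x + z) - Φ x -
    (Metric.ball (0 : Euc N) 1).indicator (fun w => ⟪gradient Φ x, w⟫) z) ∂ν

/-- `ν` is a symmetric Lévy measure supported in `B_R(0)`, with
`∫_B |z|² ν(dz) < ∞` and `ν(ℝ^N ∖ B) < ∞`. -/
def LevyMeasure {N : ℕ} (R : ℝ) (ν : Measure (Euc N)) : Prop :=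
  ν.map (fun z => -z) = ν ∧
  ν ((Metric.ball (0 : Euc N) R)ᶜ) = 0 ∧
  (∫⁻ z in Metric.ball (0 : Euc N) 1, ENNReal.ofReal (‖z‖ ^ 2) ∂ν) < ⊤ ∧
  ν ((Metric.ball (0 : Euc N) 1)ᶜ) < ⊤

/-- Bounded `C²` function. -/
def BoundedC2 {N : ℕ} (Φ : Euc N → ℝ) : Prop :=
  ContDiff ℝ 2 Φ ∧ ∃ M, ∀ y, |Φ y| ≤ M

/-!
Put `χ = ψ - Φ` and `d(x) = χ(x) - min_{B̄_R(x)} χ ≥ 0`, a continuous function. Taking for `y`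
a minimiser of `χ` on `B̄_R(x)`, the claim becomes `ε G(t,x) - d(x) ≤ o(ε)` on `[0,T] × K`, where
`G` is the continuous function `F(ψ-jet) - F(Φ-jet)`. Where `d(x) = 0`, the point `x` minimises `χ`
on `B̄_R(x) ⊇ x + supp ν`, so `Dψ = DΦ`, `D²ψ ≥ D²Φ` and `I[x,ψ] ≥ I[x,Φ]`, and ellipticity gives
`G ≤ 0`. Hence, for `a > 0`, `d` has a positive lower bound `c` on the compact set `{G ≥ a}`, and
`ε G - d ≤ ε a` everywhere as soon as `ε sup G < c`: the supremum of `ε G - d` is `o(ε)`.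
-/

section SecondOrder

variable {E F : Type*} [NormedAddCommGroup E] [NormedSpace ℝ E]
  [NormedAddCommGroup F] [NormedSpace ℝ F]

theorem IsLocalMin.deriv_deriv_nonneg {g : ℝ → ℝ} {a : ℝ} (h : IsLocalMin g a)
    (hc : ContinuousAt g a) : 0 ≤ deriv (deriv g) a := by
  by_contra! hneg
  have hconst : g =ᶠ[𝓝 a] fun _ => g a := by
    filter_upwards [h, isLocalMax_of_deriv_deriv_neg hneg h.deriv_eq_zero hc]
      with s hmin hmax using le_antisymm hmax hmin
  exact hneg.ne (by simp [hconst.deriv.deriv_eq])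

theorem IsLocalMin.fderiv_fderiv_apply_self_nonneg {f : E → ℝ} (hf : ContDiff ℝ 2 f) {x : E}
    (h : IsLocalMin f x) (v : E) : 0 ≤ fderiv ℝ (fderiv ℝ f) x v v := by
  have hd1 : Differentiable ℝ f := hf.differentiable (by norm_num)
  have hd2 : Differentiable ℝ (fderiv ℝ f) :=
    (hf.fderiv_right (m := 1) (by norm_num)).differentiable one_ne_zero
  have hline (s : ℝ) : HasDerivAt (fun s : ℝ => x + s • v) v s := by
    simpa using ((hasDerivAt_id s).smul_const v).const_add x
  have hderiv : deriv (fun s : ℝ => f (x + s • v)) = fun s => fderiv ℝ f (x + s • v) v :=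
    funext fun s => ((hd1 _).hasFDerivAt.comp_hasDerivAt s (hline s)).deriv
  have hderiv2 : HasDerivAt (fun s : ℝ => fderiv ℝ f (x + s • v) v)
      (fderiv ℝ (fderiv ℝ f) x v v) 0 := by
    simpa using ((hd2 _).hasFDerivAt.comp_hasDerivAt 0 (hline 0)).clm_apply (hasDerivAt_const 0 v)
  have hmin : IsLocalMin (fun s : ℝ => f (x + s • v)) 0 :=
    IsLocalMin.comp_continuous (by simpa using h) (by fun_prop)
  simpa [hderiv, hderiv2.deriv] using hmin.deriv_deriv_nonneg
    (hf.continuous.comp (by fun_prop)).continuousAt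

theorem norm_image_sub_sub_fderiv_le {f : E → F} (hf : ContDiff ℝ 2 f) {x z : E} {L : ℝ}
    (hL : ∀ w ∈ segment ℝ x (x + z), ‖fderiv ℝ (fderiv ℝ f) w‖ ≤ L) :
    ‖f (x + z) - f x - fderiv ℝ f x z‖ ≤ L * ‖z‖ ^ 2 := by
  have hd1 : Differentiable ℝ f := hf.differentiable (by norm_num)
  have hd2 : Differentiable ℝ (fderiv ℝ f) :=
    (hf.fderiv_right (m := 1) (by norm_num)).differentiable one_ne_zero
  have hx := left_mem_segment ℝ x (x + z)
  have hderiv : ∀ w ∈ segment ℝ x (x + z), ‖fderiv ℝ f w - fderiv ℝ f x‖ ≤ L * ‖z‖ := by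
    intro w hw
    have hwx : ‖w - x‖ ≤ ‖z‖ := by
      simpa [dist_eq_norm] using segment_subset_closedBall_left x (x + z) hw
    calc ‖fderiv ℝ f w - fderiv ℝ f x‖ ≤ L * ‖w - x‖ :=
          (convex_segment _ _).norm_image_sub_le_of_norm_fderiv_le (fun y _ => hd2 y) hL hx hw
      _ ≤ L * ‖z‖ := by gcongr; exact (norm_nonneg (fderiv ℝ (fderiv ℝ f) x)).trans (hL x hx)
  simpa [sq, mul_assoc] using (convex_segment _ _).norm_image_sub_le_of_norm_fderiv_le'
    (fun y _ => hd1 y) hderiv hx (right_mem_segment ℝ x (x + z))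

end SecondOrder

section BallInf

variable {E : Type*} [NormedAddCommGroup E] [ProperSpace E] {χ : E → ℝ} {R : ℝ}

def ballInf (χ : E → ℝ) (R : ℝ) (x : E) : ℝ :=
  sInf ((fun z => χ (x + z)) '' closedBall 0 R)

theorem continuous_ballInf (hχ : Continuous χ) : Continuous (ballInf χ R) :=
  (isCompact_closedBall 0 R).continuous_sInf (f := fun x z => χ (x + z)) (by fun_prop)

theorem ballInf_le (hχ : Continuous χ) {x y : E} (hy : y ∈ closedBall x R) :
    ballInf χ R x ≤ χ y := by
  have hyx : y - x ∈ closedBall (0 : E) R := by simpa [dist_eq_norm] using hy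
  simpa [ballInf] using csInf_le (((isCompact_closedBall (0 : E) R).image (by fun_prop)).bddBelow)
    (mem_image_of_mem (fun z => χ (x + z)) hyx)

theorem exists_mem_closedBall_eq_ballInf (hχ : Continuous χ) (hR : 0 ≤ R) (x : E) :
    ∃ y ∈ closedBall x R, χ y = ballInf χ R x := by
  obtain ⟨z, hz, hχz⟩ := ((isCompact_closedBall (0 : E) R).image
    (f := fun z => χ (x + z)) (by fun_prop)).sInf_mem ((nonempty_closedBall.2 hR).image _)
  exact ⟨x + z, by simpa using hz, hχz⟩

theorem isMinOn_of_ballInf_eq (hχ : Continuous χ) {x : E} (h : ballInf χ R x = χ x) :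
    IsMinOn χ (closedBall x R) x :=
  fun _ hy => h ▸ ballInf_le hχ hy

end BallInf

section LittleO

variable {X : Type*} [TopologicalSpace X] {P : Set X} {G d : X → ℝ}

theorem IsCompact.eventually_mul_sub_le (hP : IsCompact P) (hG : Continuous G)
    (hd : Continuous d) (hd0 : ∀ p ∈ P, 0 ≤ d p) (hGd : ∀ p ∈ P, d p = 0 → G p ≤ 0)
    {a : ℝ} (ha : 0 < a) : ∀ᶠ ε in 𝓝[>] (0 : ℝ), ∀ p ∈ P, ε * G p - d p ≤ ε * a := by
  obtain ⟨c, hc, hcd⟩ : ∃ c, 0 < c ∧ ∀ p ∈ P ∩ G ⁻¹' Ici a, c ≤ d p :=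
    (hP.inter_right (isClosed_Ici.preimage hG)).exists_forall_le' hd.continuousOn
      fun p ⟨hp, hGp⟩ => (hd0 p hp).lt_of_ne fun h => by
        linarith [hGd p hp h.symm, show a ≤ G p from hGp]
  obtain ⟨C, hC⟩ := hP.bddAbove_image hG.continuousOn
  have hsmall : ∀ᶠ ε in 𝓝 (0 : ℝ), ε * C < c :=
    (continuous_mul_const C).tendsto' 0 0 (zero_mul C) |>.eventually (gt_mem_nhds hc)
  filter_upwards [self_mem_nhdsWithin, nhdsWithin_le_nhds hsmall]
    with ε (hε : 0 < ε) hεC p hp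
  rcases le_or_gt a (G p) with hGp | hGp
  · have hGC : ε * G p ≤ ε * C := by gcongr; exact hC (mem_image_of_mem G hp)
    nlinarith [hcd p ⟨hp, hGp⟩]
  · nlinarith [hd0 p hp]

theorem IsCompact.exists_forall_mul_sub_le (hP : IsCompact P) (hG : Continuous G)
    (hd : Continuous d) (hd0 : ∀ p ∈ P, 0 ≤ d p) (hGd : ∀ p ∈ P, d p = 0 → G p ≤ 0) :
    ∃ o : ℝ → ℝ, Tendsto (fun ε => o ε / ε) (𝓝[>] 0) (𝓝 0) ∧
      ∀ ε, ∀ p ∈ P, ε * G p - d p ≤ o ε := by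
  set S : ℝ → Set ℝ := fun ε => insert 0 ((fun p => ε * G p - d p) '' P)
  have hS : ∀ ε, BddAbove (S ε) := fun ε =>
    (hP.bddAbove_image (by fun_prop)).insert 0
  refine ⟨fun ε => sSup (S ε), tendsto_order.2 ⟨fun a ha => ?_, fun a ha => ?_⟩,
    fun ε p hp => le_csSup (hS ε) (mem_insert_of_mem _ (mem_image_of_mem _ hp))⟩
  · filter_upwards [self_mem_nhdsWithin] with ε (hε : 0 < ε)
    exact ha.trans_le (div_nonneg (le_csSup (hS ε) (mem_insert _ _)) hε.le)
  · filter_upwards [self_mem_nhdsWithin, hP.eventually_mul_sub_le hG hd hd0 hGd (half_pos ha)]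
      with ε (hε : 0 < ε) hle
    have : sSup (S ε) ≤ ε * (a / 2) := by
      refine csSup_le (insert_nonempty _ _) (forall_mem_insert.2 ⟨by positivity, ?_⟩)
      exact forall_mem_image.2 hle
    rw [div_lt_iff₀ hε]
    nlinarith

end LittleO

section Levy

variable {N : ℕ} {R : ℝ} {ν : Measure (Euc N)} {Φ ψ : Euc N → ℝ}

theorem continuous_gradient_of_contDiff (hΦ : ContDiff ℝ 2 Φ) : Continuous (gradient Φ) :=
  (InnerProductSpace.toDual ℝ (Euc N)).symm.continuous.comp
    (hΦ.continuous_fderiv (by norm_num))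

theorem continuous_hess (hΦ : ContDiff ℝ 2 Φ) : Continuous (hess Φ) :=
  (hΦ.fderiv_right (m := 1) (by norm_num)).continuous_fderiv one_ne_zero

def levyIntegrand (Φ : Euc N → ℝ) (x z : Euc N) : ℝ :=
  Φ (x + z) - Φ x - (ball (0 : Euc N) 1).indicator (fun w => ⟪gradient Φ x, w⟫) z

theorem aestronglyMeasurable_levyIntegrand (hΦ : Continuous Φ) (x : Euc N) :
    AEStronglyMeasurable (levyIntegrand Φ x) ν :=
  ((hΦ.comp (continuous_const_add x)).sub continuous_const).aestronglyMeasurable.sub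
    ((continuous_const.inner continuous_id).aestronglyMeasurable.indicator measurableSet_ball)

def levyBound (L M : ℝ) (z : Euc N) : ℝ :=
  (ball (0 : Euc N) 1).indicator (fun z => L * ‖z‖ ^ 2) z +
    (ball (0 : Euc N) 1)ᶜ.indicator (fun _ => 2 * M) z

theorem integrable_levyBound (hν : LevyMeasure R ν) (L M : ℝ) :
    Integrable (levyBound L M) ν := by
  obtain ⟨-, -, hsmall, hlarge⟩ := hν
  refine Integrable.add ?_ ?_
  · rw [integrable_indicator_iff measurableSet_ball]
    refine Integrable.const_mul
      ⟨(by fun_prop : Continuous fun z : Euc N => ‖z‖ ^ 2).aestronglyMeasurable, ?_⟩ L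
    rwa [hasFiniteIntegral_iff_ofReal (f := fun z : Euc N => ‖z‖ ^ 2)
      (.of_forall fun z => by positivity)]
  · rw [integrable_indicator_iff measurableSet_ball.compl]
    exact integrableOn_const hlarge.ne

theorem exists_norm_levyIntegrand_le (hΦ : ContDiff ℝ 2 Φ) {M : ℝ} (hM : ∀ y, |Φ y| ≤ M)
    (x₀ : Euc N) : ∃ L, ∀ x ∈ closedBall x₀ 1, ∀ z, ‖levyIntegrand Φ x z‖ ≤ levyBound L M z := by
  obtain ⟨L, hL⟩ := (isCompact_closedBall x₀ 2).exists_bound_of_continuousOn (f := hess Φ)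
    (continuous_hess hΦ).continuousOn
  refine ⟨L, fun x hx z => ?_⟩
  by_cases hz : z ∈ ball (0 : Euc N) 1
  · have hseg : segment ℝ x (x + z) ⊆ closedBall x₀ 2 := by
      refine (segment_subset_closedBall_left x (x + z)).trans (closedBall_subset_closedBall' ?_)
      rw [mem_closedBall] at hx
      rw [mem_ball_zero_iff] at hz
      simp only [dist_self_add_right]
      linarith
    rw [levyIntegrand, levyBound, indicator_of_mem hz, indicator_of_mem hz,
      indicator_of_notMem (notMem_compl_iff.2 hz), add_zero, inner_gradient_left]
    exact norm_image_sub_sub_fderiv_le hΦ fun w hw => hL w (hseg hw)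
  · rw [levyIntegrand, levyBound, indicator_of_notMem hz, indicator_of_notMem hz,
      indicator_of_mem (mem_compl hz), sub_zero, zero_add, Real.norm_eq_abs]
    linarith [abs_sub (Φ (x + z)) (Φ x), hM (x + z), hM x]

theorem integrable_levyIntegrand (hν : LevyMeasure R ν) (hΦ : BoundedC2 Φ) (x : Euc N) :
    Integrable (levyIntegrand Φ x) ν := by
  obtain ⟨hΦ, M, hM⟩ := hΦ
  obtain ⟨L, hL⟩ := exists_norm_levyIntegrand_le hΦ hM x
  exact (integrable_levyBound hν L M).mono' (aestronglyMeasurable_levyIntegrand hΦ.continuous x)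
    (.of_forall (hL x (mem_closedBall_self zero_le_one)))

theorem continuous_levyOp (hν : LevyMeasure R ν) (hΦ : BoundedC2 Φ) :
    Continuous (levyOp ν Φ) := by
  obtain ⟨hΦ, M, hM⟩ := hΦ
  refine continuous_iff_continuousAt.2 fun x₀ => ?_
  obtain ⟨L, hL⟩ := exists_norm_levyIntegrand_le hΦ hM x₀
  refine continuousAt_of_dominated
    (.of_forall fun x => aestronglyMeasurable_levyIntegrand hΦ.continuous x) ?_
    (integrable_levyBound hν L M) (.of_forall fun z => ?_)
  · filter_upwards [closedBall_mem_nhds x₀ zero_lt_one] with x hx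
    exact .of_forall (hL x hx)
  · by_cases hz : z ∈ ball (0 : Euc N) 1
    · have := continuous_gradient_of_contDiff hΦ
      have := hΦ.continuous
      simp only [indicator_of_mem hz]
      fun_prop
    · have := hΦ.continuous
      simp only [indicator_of_notMem hz]
      fun_prop

theorem levyOp_le_levyOp_of_isMinOn (hν : LevyMeasure R ν) (hΦ : BoundedC2 Φ)
    (hψ : BoundedC2 ψ) {x : Euc N} (hmin : IsMinOn (fun y => ψ y - Φ y) (closedBall x R) x)
    (hgrad : gradient ψ x = gradient Φ x) : levyOp ν Φ x ≤ levyOp ν ψ x := by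
  refine integral_mono_ae (integrable_levyIntegrand hν hΦ x)
    (integrable_levyIntegrand hν hψ x) ?_
  filter_upwards [measure_eq_zero_iff_ae_notMem.1 hν.2.1] with z hz
  have hxz : x + z ∈ closedBall x R := by
    simpa [dist_eq_norm] using (mem_ball_zero_iff.1 (not_not.1 hz)).le
  have : ψ x - Φ x ≤ ψ (x + z) - Φ (x + z) := hmin hxz
  simp only [hgrad]
  linarith

end Levy

section Elliptic

variable {N : ℕ} {R : ℝ} {ν : Measure (Euc N)} {F : ℝ → Euc N → Euc N → Bil N → ℝ → ℝ}
  {Φ ψ : Euc N → ℝ}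

theorem ContinuousF.continuous_comp_jet (hF : ContinuousF F) (hν : LevyMeasure R ν)
    (hΦ : BoundedC2 Φ) :
    Continuous fun p : ℝ × Euc N => F p.1 p.2 (gradient Φ p.2) (hess Φ p.2) (levyOp ν Φ p.2) :=
  hF.comp (continuous_fst.prodMk (continuous_snd.prodMk
    (((continuous_gradient_of_contDiff hΦ.1).comp continuous_snd).prodMk
      (((continuous_hess hΦ.1).comp continuous_snd).prodMk
        ((continuous_levyOp hν hΦ).comp continuous_snd)))))

theorem Elliptic.apply_le_of_isMinOn_closedBall (hF : Elliptic F) (hR : 0 < R)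
    (hν : LevyMeasure R ν) (hΦ : BoundedC2 Φ) (hψ : BoundedC2 ψ) {x : Euc N}
    (hmin : IsMinOn (fun y => ψ y - Φ y) (closedBall x R) x) (t : ℝ) :
    F t x (gradient ψ x) (hess ψ x) (levyOp ν ψ x)
      ≤ F t x (gradient Φ x) (hess Φ x) (levyOp ν Φ x) := by
  have hloc : IsLocalMin (fun y => ψ y - Φ y) x := hmin.isLocalMin (closedBall_mem_nhds x hR)
  have hd (f : Euc N → ℝ) (hf : BoundedC2 f) : Differentiable ℝ f :=
    hf.1.differentiable (by norm_num)
  have hdd (f : Euc N → ℝ) (hf : BoundedC2 f) : Differentiable ℝ (fderiv ℝ f) :=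
    (hf.1.fderiv_right (m := 1) (by norm_num)).differentiable one_ne_zero
  have hgrad : gradient ψ x = gradient Φ x := by
    have h := hloc.fderiv_eq_zero
    rw [fderiv_fun_sub (hd ψ hψ x) (hd Φ hΦ x), sub_eq_zero] at h
    rw [gradient, gradient, h]
  have hhess (v : Euc N) : hess Φ x v v ≤ hess ψ x v v := by
    have h := hloc.fderiv_fderiv_apply_self_nonneg (hψ.1.sub hΦ.1) v
    have hsub : fderiv ℝ (fun y => ψ y - Φ y) = fun y => fderiv ℝ ψ y - fderiv ℝ Φ y :=
      funext fun y => fderiv_fun_sub (hd ψ hψ y) (hd Φ hΦ y)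
    rw [hsub, fderiv_fun_sub (hdd ψ hψ x) (hdd Φ hΦ x)] at h
    simpa [hess] using h
  rw [hgrad]
  exact hF _ _ _ _ _ _ _ hhess (levyOp_le_levyOp_of_isMinOn hν hΦ hψ hmin hgrad)

end Elliptic

theorem crucial_lemma_pide_general
    {N : ℕ} (R : ℝ) (hR : 0 < R)
    (ν : Measure (Euc N)) (hν : LevyMeasure R ν)
    (F : ℝ → Euc N → Euc N → Bil N → ℝ → ℝ)
    (hFc : ContinuousF F) (hFe : Elliptic F)
    (Φ ψ : Euc N → ℝ) (hΦ : BoundedC2 Φ) (hψ : BoundedC2 ψ)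
    (K : Set (Euc N)) (hK : IsCompact K) (T : ℝ) :
    ∃ o : ℝ → ℝ, Tendsto (fun ε => o ε / ε) (𝓝[>] (0:ℝ)) (𝓝 0) ∧
      ∀ ε > (0:ℝ), ∀ t ∈ Icc (0:ℝ) T, ∀ x ∈ K, ∃ y ∈ closedBall x R,
        ψ y + Φ x - Φ y - ε * F t x (gradient Φ x) (hess Φ x) (levyOp ν Φ x)
          ≤ ψ x - ε * F t x (gradient ψ x) (hess ψ x) (levyOp ν ψ x) + o ε := by
  set χ : Euc N → ℝ := fun y => ψ y - Φ y
  have hχ : Continuous χ := hψ.1.continuous.sub hΦ.1.continuous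
  set G : ℝ × Euc N → ℝ := fun p =>
    F p.1 p.2 (gradient ψ p.2) (hess ψ p.2) (levyOp ν ψ p.2) -
      F p.1 p.2 (gradient Φ p.2) (hess Φ p.2) (levyOp ν Φ p.2)
  set d : ℝ × Euc N → ℝ := fun p => χ p.2 - ballInf χ R p.2
  have hGd : ∀ p : ℝ × Euc N, d p = 0 → G p ≤ 0 := fun p hp =>
    sub_nonpos.2 <| hFe.apply_le_of_isMinOn_closedBall hR hν hΦ hψ
      (isMinOn_of_ballInf_eq hχ (sub_eq_zero.1 hp).symm) p.1
  obtain ⟨o, ho, hle⟩ := (isCompact_Icc.prod hK).exists_forall_mul_sub_le (G := G) (d := d)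
    ((hFc.continuous_comp_jet hν hψ).sub (hFc.continuous_comp_jet hν hΦ))
    ((hχ.sub (continuous_ballInf hχ)).comp continuous_snd)
    (fun p _ => sub_nonneg.2 (ballInf_le hχ (mem_closedBall_self hR.le))) (fun p _ => hGd p)
  refine ⟨o, ho, fun ε _ t ht x hx => ?_⟩
  obtain ⟨y, hy, hχy⟩ := exists_mem_closedBall_eq_ballInf hχ hR.le x
  refine ⟨y, hy, ?_⟩
  linarith [hle ε (t, x) ⟨ht, hx⟩]

/-- Crucial lemma for PIDE (Lemma 2.1). -/
theorem crucial_lemma_pide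
    {N : ℕ} (hN : 1 ≤ N) (R : ℝ) (hR : 0 < R)
    (ν : Measure (Euc N)) (hν : LevyMeasure R ν)
    (F : ℝ → Euc N → Euc N → Bil N → ℝ → ℝ)
    (hFc : ContinuousF F) (hFe : Elliptic F)
    (Φ ψ : Euc N → ℝ) (hΦ : BoundedC2 Φ) (hψ : BoundedC2 ψ)
    (K : Set (Euc N)) (hK : IsCompact K) (T : ℝ) (hT : 0 < T) :
    ∃ o : ℝ → ℝ, Tendsto (fun ε => o ε / ε) (𝓝[>] (0:ℝ)) (𝓝 0) ∧
      ∀ ε > (0:ℝ), ∀ t ∈ Icc (0:ℝ) T, ∀ x ∈ K, ∃ y ∈ closedBall x R,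
        ψ y + Φ x - Φ y - ε * F t x (gradient Φ x) (hess Φ x) (levyOp ν Φ x)
          ≤ ψ x - ε * F t x (gradient ψ x) (hess ψ x) (levyOp ν ψ x) + o ε :=
  crucial_lemma_pide_general R hR ν hν F hFc hFe Φ ψ hΦ hψ K hK T
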